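/- Let G be a finite group with |G| = 2⁴·3·7·19·41²·83³·367 and degree pattern D(G) = (4,3,3,1,4,2,1), i.e., deg_G(2)=4, deg_G(3)=3, deg_G(7)=3, deg_G(19)=1, deg_G(41)=4, deg_G(83)=2, deg_G(367)=1. Then for every solvable normal subgroup K of G, the prime 367 does not divide |K|. -/

import Mathlib

open scoped MatrixGroups

/-- Two distinct primes `p` and `q` dividing `|G|` are adjacent in the prime graph `Γ(G)`
of a finite group `G` iff `G` has an element of order `p * q`. -/
def primeGraphAdj (G : Type*) [Group G] (p q : ℕ) : Prop :=
  p ≠ q ∧ p.Prime ∧ q.Prime ∧ p ∣ Nat.card G ∧ q ∣ Nat.card G ∧ ∃ g : G, orderOf g = p * q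

open scoped Classical in
/-- The degree of a vertex `p` in the prime graph of `G`: the number of primes dividing `|G|`
that are adjacent to `p`. -/
noncomputable def primeGraphDeg (G : Type*) [Group G] (p : ℕ) : ℕ :=
  ((Nat.card G).primeFactors.filter (fun r => primeGraphAdj G p r)).card

/-!
If `367` divides the order of a solvable normal subgroup, going down its derived series gives a
normal subgroup `A` of `G` with `367 ∣ |A|` but `367 ∤ |N|`, where `N = [A, A]`. As `367 ∥ |G|`,
the Sylow `367`-subgroup of the abelian group `A / N` is a normal subgroup of order `367` of
`G / N`. Let `p ∈ {7, 19}`, so that `p ∥ |G|`, `p ∤ 366` and `367 ∤ p - 1`. If `p ∤ |N|`, an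
element of order `p` of `G / N` normalizes, hence centralizes, that subgroup, which gives an
element of order `367 p` in `G / N` and then in `G`. If `p ∣ |N|`, the Frattini argument puts an
element of order `367` into the normalizer of a subgroup of order `p`, which it again
centralizes. Either way `367` is adjacent to both `7` and `19`, against `deg(367) = 1`.
-/

open Subgroup

section

variable {G : Type*} [Group G]

theorem Subgroup.commutator_lt_self {K : Subgroup G} [Group.IsSolvable K] (hK : K ≠ ⊥) :
    ⁅K, K⁆ < K := by
  rw [← nontrivial_iff_ne_bot] at hK
  rw [← K.range_subtype, MonoidHom.range_eq_map, ← map_commutator, map_subtype_lt_map_subtype]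
  exact Group.IsSolvable.commutator_lt_top_of_nontrivial K

theorem Subgroup.mem_centralizer_of_mem_normalizer_of_coprime {H : Subgroup G} [Finite H]
    [IsCyclic H] {y : G} (hy : y ∈ normalizer (H : Set G))
    (hcop : (orderOf y).Coprime (Nat.totient (Nat.card H))) : y ∈ centralizer (H : Set G) := by
  have h₁ : orderOf (H.normalizerMonoidHom ⟨y, hy⟩) ∣ orderOf y :=
    orderOf_mk y hy ▸ orderOf_map_dvd _ _
  have h₂ : orderOf (H.normalizerMonoidHom ⟨y, hy⟩) ∣ Nat.totient (Nat.card H) :=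
    IsCyclic.card_mulAut H ▸ _root_.orderOf_dvd_natCard _
  have hker : ⟨y, hy⟩ ∈ H.normalizerMonoidHom.ker :=
    orderOf_eq_one_iff.mp (Nat.eq_one_of_dvd_coprimes hcop h₁ h₂)
  rwa [normalizerMonoidHom_ker, mem_subgroupOf] at hker

theorem exists_orderOf_eq_mul_of_mem_normalizer {q : ℕ} (hq : q.Prime) {P : Subgroup G}
    (hP : Nat.card P = q) {y : G} (hy : y ∈ normalizer (P : Set G))
    (hcop : (orderOf y).Coprime (q * (q - 1))) : ∃ g : G, orderOf g = q * orderOf y := by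
  have : Fact q.Prime := ⟨hq⟩
  have := isCyclic_of_prime_card hP
  have : Finite P := Nat.finite_of_card_ne_zero (hP ▸ hq.ne_zero)
  obtain ⟨x, hx⟩ := IsCyclic.exists_ofOrder_eq_natCard (α := P)
  have hyx : y ∈ centralizer (P : Set G) := mem_centralizer_of_mem_normalizer_of_coprime hy
    (by rw [hP, Nat.totient_prime hq]; exact hcop.coprime_mul_left_right)
  have hxy : Commute (x : G) y := mem_centralizer_iff.mp hyx x x.2
  have hxq : orderOf (x : G) = q := by rw [orderOf_coe, hx, hP]
  refine ⟨x * y, ?_⟩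
  rw [hxy.orderOf_mul_eq_mul_orderOf_of_coprime (hxq ▸ hcop.coprime_mul_right_right.symm), hxq]

theorem exists_orderOf_eq_of_surjective [Finite G] {Q : Type*} [Group Q] {f : G →* Q}
    (hf : Function.Surjective f) (q : Q) : ∃ g : G, orderOf g = orderOf q := by
  obtain ⟨g, rfl⟩ := hf q
  exact ⟨_, orderOf_pow_orderOf_div (orderOf_pos g).ne' (orderOf_map_dvd f g)⟩

theorem Sylow.card_eq_self_of_not_sq_dvd [Finite G] {p : ℕ} [hp : Fact p.Prime] (P : Sylow p G)
    (h : p ∣ Nat.card G) (h2 : ¬ p ^ 2 ∣ Nat.card G) : Nat.card P = p := by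
  have hG : Nat.card G ≠ 0 := Nat.card_pos.ne'
  rw [← pow_one p] at h
  rw [hp.out.pow_dvd_iff_le_factorization hG] at h h2
  rw [P.card_eq_multiplicity, show (Nat.card G).factorization p = 1 by omega, pow_one]

theorem dvd_card_quotient_of_not_dvd_card {p : ℕ} (hp : p.Prime) {N : Subgroup G} [N.Normal]
    (hG : p ∣ Nat.card G) (hN : ¬ p ∣ Nat.card N) : p ∣ Nat.card (G ⧸ N) := by
  rw [card_eq_card_quotient_mul_card_subgroup N] at hG
  exact (hp.dvd_mul.mp hG).resolve_right hN

theorem Subgroup.dvd_card_map_of_not_dvd_card_ker [Finite G] {G' : Type*} [Group G'] {p : ℕ}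
    [hp : Fact p.Prime] {H : Subgroup G} (f : G →* G') (hH : p ∣ Nat.card H)
    (hker : ¬ p ∣ Nat.card f.ker) : p ∣ Nat.card (H.map f) := by
  obtain ⟨a, ha⟩ := exists_prime_orderOf_dvd_card' p hH
  have hfa : orderOf (f a) = p := by
    refine (hp.out.eq_one_or_self_of_dvd _ (ha ▸ orderOf_coe a ▸ orderOf_map_dvd f a)).resolve_left
      fun h => hker ?_
    rw [← ha, ← orderOf_coe]
    exact f.ker.orderOf_dvd_natCard (orderOf_eq_one_iff.mp h)
  exact hfa ▸ (H.map f).orderOf_dvd_natCard (mem_map_of_mem f a.2)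

theorem card_quotient_dvd_card_of_sup_eq_top {M N : Subgroup G} [N.Normal] (h : M ⊔ N = ⊤) :
    Nat.card (G ⧸ N) ∣ Nat.card M := by
  have hM : M.map (QuotientGroup.mk' N) = ⊤ := by
    rw [← map_top_of_surjective _ (QuotientGroup.mk'_surjective N), ← h, Subgroup.map_sup,
      QuotientGroup.map_mk'_self, sup_bot_eq]
  rw [← card_top (G := G ⧸ N), ← hM]
  exact card_map_dvd M _

theorem exists_normal_dvd_card_not_dvd_card_commutator [Finite G] {r : ℕ} (hr : r ≠ 1)
    (K : Subgroup G) [hKn : K.Normal] [hKs : Group.IsSolvable K] (hK : r ∣ Nat.card K) :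
    ∃ A : Subgroup G, A.Normal ∧ r ∣ Nat.card A ∧ ¬ r ∣ Nat.card (⁅A, A⁆ : Subgroup G) := by
  revert hKn hKs hK
  induction K using WellFoundedLT.induction with
  | ind K ih =>
    intro hKn hKs hK
    by_cases h : r ∣ Nat.card (⁅K, K⁆ : Subgroup G)
    · have hK₀ : K ≠ ⊥ := by
        rintro rfl
        exact hr (Nat.dvd_one.mp (card_bot (G := G) ▸ hK))
      have hlt := commutator_lt_self hK₀
      have : Group.IsSolvable (⁅K, K⁆ : Subgroup G) :=
        Group.isSolvable_of_isSolvable_injective (inclusion_injective hlt.le)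
      exact ih _ hlt h
    · exact ⟨K, hKn, hK, h⟩

theorem exists_normal_card_eq_of_not_dvd_card_commutator [Finite G] {r : ℕ} [Fact r.Prime]
    {A : Subgroup G} [hA : A.Normal] (hAr : r ∣ Nat.card A)
    (hAr' : ¬ r ∣ Nat.card (⁅A, A⁆ : Subgroup G)) (hG : ¬ r ^ 2 ∣ Nat.card G) :
    ∃ R : Subgroup (G ⧸ ⁅A, A⁆), R.Normal ∧ Nat.card R = r := by
  set B := A.map (QuotientGroup.mk' ⁅A, A⁆)
  have : B.Normal := hA.map _ (QuotientGroup.mk'_surjective _)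
  have : IsMulCommutative B :=
    commutator_self_eq_bot_iff.mp (by rw [← map_commutator, QuotientGroup.map_mk'_self])
  have hBr : r ∣ Nat.card B :=
    dvd_card_map_of_not_dvd_card_ker _ hAr (by rwa [QuotientGroup.ker_mk'])
  have hBr' : ¬ r ^ 2 ∣ Nat.card B :=
    fun h => hG (h.trans ((card_subgroup_dvd_card B).trans (card_quotient_dvd_card _)))
  obtain ⟨P⟩ : Nonempty (Sylow r B) := Sylow.nonempty
  have := P.characteristic_of_normal inferInstance
  exact ⟨(P : Subgroup B).map B.subtype, inferInstance,
    by rw [card_map_of_injective B.subtype_injective, P.card_eq_self_of_not_sq_dvd hBr hBr']⟩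

theorem exists_mem_normalizer_orderOf_eq [Finite G] {N : Subgroup G} [N.Normal] {p r : ℕ}
    [Fact p.Prime] [Fact r.Prime] (hp : p ∣ Nat.card N) (hp2 : ¬ p ^ 2 ∣ Nat.card N)
    (hrG : r ∣ Nat.card G) (hrN : ¬ r ∣ Nat.card N) :
    ∃ P : Subgroup G, Nat.card P = p ∧ ∃ y ∈ normalizer (P : Set G), orderOf y = r := by
  obtain ⟨P⟩ : Nonempty (Sylow p N) := Sylow.nonempty
  have hrM : r ∣ Nat.card (normalizer ((P.map N.subtype : Subgroup G) : Set G)) :=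
    (dvd_card_quotient_of_not_dvd_card Fact.out hrG hrN).trans
      (card_quotient_dvd_card_of_sup_eq_top (Sylow.normalizer_sup_eq_top P))
  obtain ⟨y, hy⟩ := exists_prime_orderOf_dvd_card' r hrM
  refine ⟨P.map N.subtype, ?_, y, y.2, by rw [orderOf_coe, hy]⟩
  rw [card_map_of_injective N.subtype_injective, P.card_eq_self_of_not_sq_dvd hp hp2]

theorem exists_orderOf_eq_mul_of_isSolvable [Finite G] (K : Subgroup G) [K.Normal]
    [Group.IsSolvable K] {r p : ℕ} (hr : r.Prime) (hp : p.Prime) (hpr : p ≠ r)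
    (hK : r ∣ Nat.card K) (hr2 : ¬ r ^ 2 ∣ Nat.card G) (hpG : p ∣ Nat.card G)
    (hp2 : ¬ p ^ 2 ∣ Nat.card G) (hpr1 : p.Coprime (r - 1)) (hrp1 : r.Coprime (p - 1)) :
    ∃ g : G, orderOf g = r * p := by
  have : Fact r.Prime := ⟨hr⟩
  have : Fact p.Prime := ⟨hp⟩
  have hcop : p.Coprime r := (Nat.coprime_primes hp hr).mpr hpr
  obtain ⟨A, hA, hAr, hNr⟩ := exists_normal_dvd_card_not_dvd_card_commutator hr.one_lt.ne' K hK
  by_cases hpN : p ∣ Nat.card (⁅A, A⁆ : Subgroup G)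
  · obtain ⟨P, hP, y, hy, rfl⟩ := exists_mem_normalizer_orderOf_eq hpN
      (fun h => hp2 (h.trans (card_subgroup_dvd_card _)))
      (hK.trans (card_subgroup_dvd_card K)) hNr
    obtain ⟨g, hg⟩ := exists_orderOf_eq_mul_of_mem_normalizer hp hP hy (hcop.symm.mul_right hrp1)
    exact ⟨g, hg.trans (mul_comm _ _)⟩
  · obtain ⟨R, hR, hRr⟩ := exists_normal_card_eq_of_not_dvd_card_commutator hAr hNr hr2
    obtain ⟨w, rfl⟩ :=
      exists_prime_orderOf_dvd_card' p (dvd_card_quotient_of_not_dvd_card hp hpG hpN)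
    obtain ⟨x, hx⟩ := exists_orderOf_eq_mul_of_mem_normalizer hr hRr
      (normalizer_eq_top_iff.mpr hR ▸ mem_top w) (hcop.mul_right hpr1)
    obtain ⟨g, hg⟩ := exists_orderOf_eq_of_surjective (QuotientGroup.mk'_surjective _) x
    exact ⟨g, hg.trans hx⟩

theorem primeGraphAdj_of_orderOf_eq {p q : ℕ} (hpq : p ≠ q) (hp : p.Prime) (hq : q.Prime)
    (g : G) (hg : orderOf g = p * q) : primeGraphAdj G p q :=
  ⟨hpq, hp, hq, (Dvd.intro q hg.symm).trans (orderOf_dvd_natCard g),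
    (Dvd.intro_left p hg.symm).trans (orderOf_dvd_natCard g), g, hg⟩

theorem two_le_primeGraphDeg [Finite G] {p q₁ q₂ : ℕ} (h₁ : primeGraphAdj G p q₁)
    (h₂ : primeGraphAdj G p q₂) (hq : q₁ ≠ q₂) : 2 ≤ primeGraphDeg G p := by
  classical
  have hmem : ∀ {q}, primeGraphAdj G p q →
      q ∈ (Nat.card G).primeFactors.filter (fun r => primeGraphAdj G p r) := fun h =>
    Finset.mem_filter.mpr ⟨Nat.mem_primeFactors.mpr ⟨h.2.2.1, h.2.2.2.2.1, Nat.card_pos.ne'⟩, h⟩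
  unfold primeGraphDeg
  exact Finset.one_lt_card.mpr ⟨q₁, hmem h₁, q₂, hmem h₂, hq⟩

end

theorem solvable_normal_not_dvd_367_L3_83_general (G : Type*) [Group G] [Finite G]
    (hcard : Nat.card G = 2 ^ 4 * 3 * 7 * 19 * 41 ^ 2 * 83 ^ 3 * 367)
    (hdeg367 : primeGraphDeg G 367 = 1) :
    ∀ K : Subgroup G, K.Normal → IsSolvable K → ¬ 367 ∣ Nat.card K := by
  intro K _ hKs hK
  have : Group.IsSolvable K := hKs
  obtain ⟨g₇, hg₇⟩ : ∃ g : G, orderOf g = 367 * 7 := by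
    apply exists_orderOf_eq_mul_of_isSolvable K <;> norm_num [hcard, hK]
  obtain ⟨g₁₉, hg₁₉⟩ : ∃ g : G, orderOf g = 367 * 19 := by
    apply exists_orderOf_eq_mul_of_isSolvable K <;> norm_num [hcard, hK]
  have h₂ : 2 ≤ primeGraphDeg G 367 := two_le_primeGraphDeg
    (primeGraphAdj_of_orderOf_eq (by norm_num) (by norm_num) (by norm_num) g₇ hg₇)
    (primeGraphAdj_of_orderOf_eq (by norm_num) (by norm_num) (by norm_num) g₁₉ hg₁₉)
    (by norm_num : 7 ≠ 19)
  omega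

theorem solvable_normal_not_dvd_367_L3_83 (G : Type*) [Group G] [Finite G]
    (hcard : Nat.card G = 2 ^ 4 * 3 * 7 * 19 * 41 ^ 2 * 83 ^ 3 * 367)
    (hdeg2 : primeGraphDeg G 2 = 4) (hdeg3 : primeGraphDeg G 3 = 3)
    (hdeg7 : primeGraphDeg G 7 = 3) (hdeg19 : primeGraphDeg G 19 = 1)
    (hdeg41 : primeGraphDeg G 41 = 4) (hdeg83 : primeGraphDeg G 83 = 2)
    (hdeg367 : primeGraphDeg G 367 = 1) :
    ∀ K : Subgroup G, K.Normal → IsSolvable K → ¬ 367 ∣ Nat.card K :=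
  solvable_normal_not_dvd_367_L3_83_general G hcard hdeg367
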